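/- Let M(∞) denote the set of asymptote classes of unit-speed geodesic rays in a complete simply connected manifold M with no focal points, equipped with the angle metric ∠(η, ζ) = sup_{p ∈ M} ∠_p(η, ζ), where ∠_p(η, ζ) is the angle at p between the unit vectors at p pointing at η and ζ. If η_n → η and ζ_n → ζ in the visual topology, then ∠(η, ζ) ≤ liminf_n ∠(η_n, ζ_n). That is, the angle metric is lower semicontinuous with respect to the visual topology. -/
import Mathlib


open Filter Metric Set Real

/-- A unit-speed, globally minimizing geodesic line in a metric space (as is the case for
geodesics in a complete simply connected manifold with no focal points). -/
def IsGeodesic {M : Type*} [MetricSpace M] (γ : ℝ → M) : Prop :=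
  ∀ s t : ℝ, dist (γ s) (γ t) = |s - t|

/-- A unit-speed geodesic ray. -/
def IsRay {M : Type*} [MetricSpace M] (γ : ℝ → M) : Prop :=
  ∀ s t : ℝ, 0 ≤ s → 0 ≤ t → dist (γ s) (γ t) = |s - t|

/-- Two curves are (positively) asymptotic: they stay at bounded distance for `t ≥ 0`. -/
def Asymptotic {M : Type*} [MetricSpace M] (γ σ : ℝ → M) : Prop :=
  ∃ C : ℝ, ∀ t : ℝ, 0 ≤ t → dist (γ t) (σ t) ≤ C

/-- Synthetic (metric) formulation of "no focal points": for every variation of geodesics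
fixing the initial point (so the variation field is a Jacobi field `J` with `J(0) = 0`),
the norm `t ↦ ‖J(t)‖` of the variation field, realized metrically as the limit of
difference quotients, is strictly increasing for `t > 0` (for nontrivial fields). -/
def NoFocalPoints (M : Type*) [MetricSpace M] : Prop :=
  ∀ Φ : ℝ → ℝ → M, (∀ s, IsGeodesic (Φ s)) → (∀ s, Φ s 0 = Φ 0 0) →
    ∀ J : ℝ → ℝ,
      (∀ t, Tendsto (fun s => dist (Φ s t) (Φ 0 t) / |s|) (nhdsWithin 0 {0}ᶜ) (nhds (J t))) →
      J ≠ 0 → StrictMonoOn J (Set.Ici 0)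

/-- Abstract data of the boundary at infinity `M(∞)` of a complete simply connected
manifold with no focal points: boundary points (asymptote classes of rays), the visual
topology, the cone topology on `M̄ = M ⊕ M(∞)`, the angle `∠_p` at each point, the ray
from `p` pointing at a boundary point, the induced boundary action of isometries, and
the asymptote-class map. -/
structure BoundaryGeometry (M : Type*) [MetricSpace M] where
  pt : Type
  top : TopologicalSpace pt
  topBar : TopologicalSpace (M ⊕ pt)
  ang : M → pt → pt → ℝ
  ang_nonneg : ∀ p η ζ, 0 ≤ ang p η ζ
  ang_le_pi : ∀ p η ζ, ang p η ζ ≤ Real.pi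
  ang_comm : ∀ p η ζ, ang p η ζ = ang p ζ η
  ang_self : ∀ p η, ang p η η = 0
  ang_triangle : ∀ p η ζ ξ, ang p η ξ ≤ ang p η ζ + ang p ζ ξ
  ray : M → pt → ℝ → M
  ray_isRay : ∀ p ξ, IsRay (ray p ξ)
  ray_zero : ∀ p ξ, ray p ξ 0 = p
  ray_asymp : ∀ p q ξ, Asymptotic (ray p ξ) (ray q ξ)
  asymp_eq : ∀ p ξ ξ', Asymptotic (ray p ξ) (ray p ξ') → ξ = ξ'
  bdryMap : (M ≃ᵢ M) → pt → pt
  bdryMap_spec : ∀ (g : M ≃ᵢ M) (p : M) (ξ : pt),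
    Asymptotic (fun t => g (ray p ξ t)) (ray (g p) (bdryMap g ξ))
  cls : (ℝ → M) → pt
  cls_spec : ∀ γ : ℝ → M, IsRay γ → Asymptotic γ (ray (γ 0) (cls γ))

/-- The angle metric `∠(η, ζ) = sup_{p ∈ M} ∠_p(η, ζ)` on the boundary at infinity. -/
noncomputable def BoundaryGeometry.Ang {M : Type*} [MetricSpace M]
    (B : BoundaryGeometry M) (η ζ : B.pt) : ℝ :=
  ⨆ p : M, B.ang p η ζ

/-- Convergence in the visual topology: the directions toward `ηₙ` converge to the
direction toward `η` at every basepoint. -/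
def BoundaryGeometry.VisualTendsto {M : Type*} [MetricSpace M] (B : BoundaryGeometry M)
    (ηseq : ℕ → B.pt) (η : B.pt) : Prop :=
  ∀ p : M, Tendsto (fun n => B.ang p (ηseq n) η) atTop (nhds 0)

/-- Lower semicontinuity of the angle metric with respect to the visual topology:
if `ηₙ → η` and `ζₙ → ζ` visually, then `∠(η, ζ) ≤ liminf ∠(ηₙ, ζₙ)`. -/
theorem stmt3 {M : Type*} [MetricSpace M] [Nonempty M] [CompleteSpace M]
    [SimplyConnectedSpace M] (hM : NoFocalPoints M) (B : BoundaryGeometry M)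
    (ηseq ζseq : ℕ → B.pt) (η ζ : B.pt)
    (hη : B.VisualTendsto ηseq η) (hζ : B.VisualTendsto ζseq ζ) :
    B.Ang η ζ ≤ Filter.liminf (fun n => B.Ang (ηseq n) (ζseq n)) atTop := by
  have hbdd : ∀ η' ζ', BddAbove (Set.range fun p : M => B.ang p η' ζ') := by
    intro η' ζ'
    exact ⟨Real.pi, by rintro x ⟨p, rfl⟩; exact B.ang_le_pi p η' ζ'⟩
  have hAngle_le : ∀ (p : M) η' ζ', B.ang p η' ζ' ≤ B.Ang η' ζ' := fun p η' ζ' =>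
    le_ciSup (hbdd η' ζ') p
  refine ciSup_le fun p => ?_
  set f : ℕ → ℝ := fun n => B.Ang (ηseq n) (ζseq n)
  set g : ℕ → ℝ := fun n =>
    B.ang p η ζ - B.ang p (ηseq n) η - B.ang p (ζseq n) ζ
  have hg_tendsto : Tendsto g atTop (nhds (B.ang p η ζ)) := by
    have := ((tendsto_const_nhds (x := B.ang p η ζ) (f := atTop)).sub (hη p)).sub (hζ p)
    simpa using this
  have hgf : ∀ n, g n ≤ f n := by
    intro n
    have h1 : B.ang p η ζ ≤ B.ang p η (ηseq n) + B.ang p (ηseq n) ζ :=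
      B.ang_triangle p η (ηseq n) ζ
    have h2 : B.ang p (ηseq n) ζ ≤ B.ang p (ηseq n) (ζseq n) + B.ang p (ζseq n) ζ :=
      B.ang_triangle p (ηseq n) (ζseq n) ζ
    have h3 : B.ang p (ηseq n) (ζseq n) ≤ f n := hAngle_le p _ _
    have hcomm : B.ang p η (ηseq n) = B.ang p (ηseq n) η := B.ang_comm p _ _
    simp only [g]
    linarith
  have hf_ub : IsBoundedUnder (· ≤ ·) atTop f :=
    isBoundedUnder_of ⟨Real.pi, fun n =>
      ciSup_le fun q => B.ang_le_pi q (ηseq n) (ζseq n)⟩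
  calc B.ang p η ζ = liminf g atTop := (hg_tendsto.liminf_eq).symm
    _ ≤ liminf f atTop := by
        refine liminf_le_liminf (Eventually.of_forall hgf) ?_ ?_
        · exact hg_tendsto.isBoundedUnder_ge
        · exact hf_ub.isCoboundedUnder_ge
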